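/- Let n ≥ 2, 1 ≤ l ≤ n, a_t = n^{8(n+1−t)} for t = 1, …, n, δ = 1/(2·n^{8n}), |a| = a_1+⋯+a_n, and S_{n,δ} = 2 − 2n² + n²(n+2)δ. Let C_l = [ (n²)!/( l!·((n−1)!)^l·(n!)^{n−l} ) + (S_{n,δ}/2 − 1)·(n²−1)!/( (l−1)!·((n−1)!)^l·(n!)^{n−l} ) ] · (2|a|)^l · ∏_{t=1}^{n−l} a_t^n · ∏_{t=n−l+1}^{n} a_t^{n−1} (this is the coefficient of z_1^n⋯z_{n−l}^n·z_{n−l+1}^{n−1}⋯z_n^{n−1}·h^l·d^0 in the polynomial N = (a_1z_1+⋯+a_nz_n+2|a|h)^{n²−1}·(a_1z_1+⋯+a_nz_n+S_{n,δ}|a|h−n²δ|a|dh)). Then |C_l| < n^{8ln} · (a_1⋯a_n)^n · (n²)!/(n!)^n. -/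

import Mathlib

noncomputable section
open scoped Classical

/-- Priority bump to avoid a stuck typeclass search. -/
instance (priority := 10000) (n : ℕ) : WellFoundedLT (Fin n) := inferInstance

/-- The base field `F = ℚ(d,h)`, realized as the fraction field of `ℚ[d,h]`. -/
abbrev Fdh : Type := FractionRing (MvPolynomial (Fin 2) ℚ)

/-- The indeterminate `d`. -/
def dvar : Fdh := algebraMap (MvPolynomial (Fin 2) ℚ) Fdh (MvPolynomial.X 0)

/-- The indeterminate `h`. -/
def hvar : Fdh := algebraMap (MvPolynomial (Fin 2) ℚ) Fdh (MvPolynomial.X 1)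

/-- Value group for the iterated Laurent series field: `ℤ^n` ordered lexicographically,
with the exponent of `z_n` most significant. -/
abbrev Gam (n : ℕ) : Type := Lex (Fin n → ℤ)

/-- The iterated Laurent series field `K_F = F((z_n^{-1}))((z_{n-1}^{-1}))⋯((z_2^{-1}))((z_1))`,
realized as a Hahn series field; supports are well-ordered with respect to the monomial order
corresponding to the region `1 ≪ |z_1| ≪ ⋯ ≪ |z_n|`. -/
abbrev KK (n : ℕ) : Type := HahnSeries (Gam n) Fdh

/-- The Hahn exponent attached to a z-monomial exponent vector `i` (exponent `i j` on `z_{j+1}`);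
larger monomials get smaller Hahn exponents, and `z_n` dominates. -/
def gamOf {n : ℕ} (i : Fin n → ℤ) : Gam n := toLex fun k => -(i k.rev)

/-- The variable `z_{j+1}` as an element of `K_F`. -/
def zv {n : ℕ} (j : Fin n) : KK n := HahnSeries.single (gamOf (Pi.single j 1)) 1

/-- The coefficient of `z^i = z_1^{i 0} ⋯ z_n^{i (n-1)}` of an iterated Laurent series. -/
def zcoeff {n : ℕ} (i : Fin n → ℤ) (x : KK n) : Fdh := x.coeff (gamOf i)

/-- `z_{[s..t]} = z_s + ⋯ + z_t` (1-based indices; `0` when `s > t`). -/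
def zS (n : ℕ) (s t : ℕ) : KK n :=
  ∑ j ∈ Finset.univ.filter (fun j : Fin n => s ≤ j.val + 1 ∧ j.val + 1 ≤ t), zv j

/-- `A⁰ = ∏_{j=1}^n (z_{[1..j]} + d·h)/z_j`. -/
def A0 (n : ℕ) : KK n :=
  ∏ j : Fin n, (zS n 1 (j.val + 1) + HahnSeries.C (dvar * hvar)) / zv j

/-- `A¹ = ∏_{1 ≤ t₁ < t₂ ≤ n} z_{[t₁..t₂]} / (z_{[t₁+1..t₂]} − z_{t₁})`. -/
def A1 (n : ℕ) : KK n :=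
  ∏ p ∈ Finset.univ.filter (fun p : Fin n × Fin n => p.1 < p.2),
    zS n (p.1.val + 1) (p.2.val + 1) / (zS n (p.1.val + 2) (p.2.val + 1) - zv p.1)

/-- `A² = ∏_{j=1}^n ( z_j/(z_{[1..j]} + h) )^{n+2}`. -/
def A2 (n : ℕ) : KK n :=
  ∏ j : Fin n, (zv j / (zS n 1 (j.val + 1) + HahnSeries.C hvar)) ^ (n + 2)

/-- `A = A⁰ · A¹ · A²`. -/
def AA (n : ℕ) : KK n := A0 n * A1 n * A2 n

/-- The coefficient of `d^j h^m` of an element of `F = ℚ(d,h)` which is a polynomial in `d, h`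
(and `0` if it is not a polynomial).  This is well defined since the algebra map from
`ℚ[d,h]` to its fraction field is injective. -/
def fCoeff (x : Fdh) (j m : ℕ) : ℚ :=
  if hq : ∃ q : MvPolynomial (Fin 2) ℚ, algebraMap (MvPolynomial (Fin 2) ℚ) Fdh q = x
  then MvPolynomial.coeff (Finsupp.single 0 j + Finsupp.single 1 m) hq.choose
  else 0

/-- `A_{z^i d^j h^m}`: the coefficient of `z^i d^j h^m` in `A`. -/
def Acf (n : ℕ) (i : Fin n → ℤ) (j m : ℕ) : ℚ := fCoeff (zcoeff i (AA n)) j m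

/-- The lattice semigroup `Λ⁺`, generated by `e_s − e_t` for `s < t` together with
`−e_1, …, −e_n`. -/
def Lam (n : ℕ) : AddSubmonoid (Fin n → ℤ) :=
  AddSubmonoid.closure
    ({x | ∃ s t : Fin n, s < t ∧ x = Pi.single s 1 - Pi.single t 1} ∪
      {x | ∃ j : Fin n, x = -Pi.single j 1})

/-- `Σi = i_1 + ⋯ + i_n`. -/
def Sig {n : ℕ} (i : Fin n → ℤ) : ℤ := ∑ j, i j

/-- The defect `D(i) = n·i_1 + (n−1)·i_2 + ⋯ + 1·i_n`. -/
def Dfk {n : ℕ} (i : Fin n → ℤ) : ℤ := ∑ j : Fin n, ((n : ℤ) - j.val) * i j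

/-- `|a| = a_1 + ⋯ + a_n`. -/
def absA {n : ℕ} (a : Fin n → ℚ) : ℚ := ∑ j, a j

/-- `S_{n,δ} = 2 − 2n² + n²(n+2)δ`. -/
def Snd (n : ℕ) (δ : ℚ) : ℚ := 2 - 2 * n ^ 2 + n ^ 2 * (n + 2) * δ

/-- A rational constant, as an element of `K_F`. -/
def cQ {n : ℕ} (q : ℚ) : KK n := HahnSeries.C (q : Fdh)

/-- The numerator `N = (a_1z_1+⋯+a_nz_n+2|a|h)^{n²−1}·(a_1z_1+⋯+a_nz_n+S_{n,δ}|a|h−n²δ|a|dh)`. -/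
def Nnum (n : ℕ) (a : Fin n → ℚ) (δ : ℚ) : KK n :=
  (∑ j, cQ (a j) * zv j + cQ (2 * absA a) * HahnSeries.C hvar) ^ (n ^ 2 - 1) *
    (∑ j, cQ (a j) * zv j + cQ (Snd n δ * absA a) * HahnSeries.C hvar
      - cQ ((n : ℚ) ^ 2 * δ * absA a) * HahnSeries.C (dvar * hvar))

/-- `B = N/(z_1⋯z_n)^n`. -/
def BB (n : ℕ) (a : Fin n → ℚ) (δ : ℚ) : KK n := Nnum n a δ / (∏ j : Fin n, zv j) ^ n

/-- The special choice `a_i = n^{8(n+1−i)}`, `i = 1, …, n`. -/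
def astd (n : ℕ) : Fin n → ℚ := fun t => (n : ℚ) ^ (8 * (n - t.val))

/-- The special choice `δ = 1/(2·n^{8n})`. -/
def δstd (n : ℕ) : ℚ := 1 / (2 * (n : ℚ) ^ (8 * n))

/-!
Bound the three factors of `C_l` separately. Since `|S_{n,δ}/2 − 1| ≤ n²` and
`n²·(n²−1)! = (n²)!`, the bracket is at most `2·(n²)!/D` with `D = ((n−1)!)^l (n!)^{n−l}`, and
`(n!)^n = n^l·D`. Next `2|a| ≤ 2n^{8n+1}`, and lowering the exponent of the last `l` weights
`a_t ≥ n^8` from `n` to `n − 1` costs a factor of at least `n^{8l}` against `(a_1⋯a_n)^n`.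
What remains is `2·(2n^{8n+1})^l·n^l < n^{8ln}·n^{8l}`, which holds as `2^{l+1} ≤ n^{l+1}`.
-/

open scoped Nat

theorem abs_Snd_div_two_sub_one_le (n : ℕ) {δ : ℚ} (hδ : 0 ≤ δ) (hδ4 : ((n : ℚ) + 2) * δ ≤ 4) :
    |Snd n δ / 2 - 1| ≤ (n : ℚ) ^ 2 := by
  have hδ0 : 0 ≤ ((n : ℚ) + 2) * δ := by positivity
  have h : Snd n δ / 2 - 1 = (n : ℚ) ^ 2 * (((n : ℚ) + 2) * δ / 2 - 1) := by unfold Snd; ring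
  rw [h, abs_mul, abs_of_nonneg (by positivity)]
  exact mul_le_of_le_one_right (by positivity) (abs_le.2 ⟨by linarith, by linarith⟩)

theorem δstd_nonneg (n : ℕ) : 0 ≤ δstd n := by
  unfold δstd; positivity

theorem add_two_mul_δstd_le {n : ℕ} (hn : 1 ≤ n) : ((n : ℚ) + 2) * δstd n ≤ 4 := by
  have hn' : (1 : ℚ) ≤ n := by exact_mod_cast hn
  have hpow : (n : ℚ) ≤ (n : ℚ) ^ (8 * n) := le_self_pow₀ hn' (by omega)
  unfold δstd
  rw [mul_one_div, div_le_iff₀ (by positivity)]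
  linarith

theorem abs_factorial_div_add_le {m : ℕ} (hm : 1 ≤ m) (l : ℕ) {c u v : ℚ} (hc : |c| ≤ m)
    (hu : 0 < u) (hv : 0 < v) :
    |(m ! : ℚ) / (l ! * u * v) + c * ((m - 1)! : ℚ) / ((l - 1)! * u * v)| ≤ 2 * m ! / (u * v) := by
  have hl : (1 : ℚ) ≤ l ! := by exact_mod_cast l.factorial_pos
  have hl' : (1 : ℚ) ≤ (l - 1)! := by exact_mod_cast (l - 1).factorial_pos
  have hfac : (m : ℚ) * (m - 1)! = m ! := by exact_mod_cast Nat.mul_factorial_pred (by omega)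
  have h₁ : (m ! : ℚ) / (l ! * u * v) ≤ m ! / (u * v) := by
    rw [mul_assoc]
    exact div_le_div_of_nonneg_left (by positivity) (by positivity) (le_mul_of_one_le_left
      (by positivity) hl)
  have h₂ : |c * ((m - 1)! : ℚ) / ((l - 1)! * u * v)| ≤ m ! / (u * v) := by
    rw [abs_div, abs_mul, abs_of_pos (by positivity : (0 : ℚ) < (m - 1)!),
      abs_of_pos (by positivity : (0 : ℚ) < (l - 1)! * u * v), mul_assoc, ← hfac]
    exact div_le_div₀ (by positivity) (by gcongr) (by positivity)
      (le_mul_of_one_le_left (by positivity) hl')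
  calc _ ≤ |(m ! : ℚ) / (l ! * u * v)| + |c * ((m - 1)! : ℚ) / ((l - 1)! * u * v)| :=
        abs_add_le _ _
    _ ≤ m ! / (u * v) + m ! / (u * v) := by
        rw [abs_of_nonneg (by positivity)]; exact add_le_add h₁ h₂
    _ = 2 * m ! / (u * v) := by ring

theorem factorial_pow_self_eq {n l : ℕ} (hn : 1 ≤ n) (hl : l ≤ n) :
    (n ! : ℚ) ^ n = n ^ l * (((n - 1)! : ℚ) ^ l * (n ! : ℚ) ^ (n - l)) := by
  have hfac : (n ! : ℚ) = n * (n - 1)! := by exact_mod_cast (Nat.mul_factorial_pred (by omega)).symm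
  calc (n ! : ℚ) ^ n = (n ! : ℚ) ^ l * (n ! : ℚ) ^ (n - l) := by
        rw [← pow_add, Nat.add_sub_cancel' hl]
    _ = _ := by nth_rewrite 1 [hfac]; ring

theorem astd_pos {n : ℕ} (t : Fin n) : 0 < astd n t := by
  have : (0 : ℚ) < n := by exact_mod_cast t.pos
  unfold astd; positivity

theorem pow_eight_le_astd {n : ℕ} (t : Fin n) : (n : ℚ) ^ 8 ≤ astd n t :=
  pow_le_pow_right₀ (by exact_mod_cast t.pos) (by omega)

theorem absA_astd_le (n : ℕ) : absA (astd n) ≤ (n : ℚ) ^ (8 * n + 1) := by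
  calc absA (astd n) ≤ ∑ _t : Fin n, (n : ℚ) ^ (8 * n) :=
        Finset.sum_le_sum fun t _ => pow_le_pow_right₀ (by exact_mod_cast t.pos) (by omega)
    _ = (n : ℚ) ^ (8 * n + 1) := by simp [pow_succ, mul_comm]

theorem prod_pow_ite_mul_pow_card_le {ι R : Type*} [Fintype ι] [CommSemiring R] [PartialOrder R]
    [IsOrderedRing R] (p : ι → Prop) [DecidablePred p] {a : ι → R} {b : R} {k : ℕ} (hk : 1 ≤ k)
    (ha : ∀ t, 0 ≤ a t) (hb : 0 ≤ b) (hba : ∀ t, ¬p t → b ≤ a t) :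
    (∏ t, a t ^ (if p t then k else k - 1)) * b ^ (Finset.univ.filter fun t => ¬p t).card
      ≤ (∏ t, a t) ^ k := by
  rw [← Finset.prod_const, Finset.prod_filter, ← Finset.prod_mul_distrib, ← Finset.prod_pow]
  refine Finset.prod_le_prod (fun t _ => ?_) (fun t _ => ?_)
  · exact mul_nonneg (pow_nonneg (ha t) _) (by split_ifs; exacts [zero_le_one, hb])
  · by_cases h : p t
    · simp [h]
    · simp only [h, if_false]
      calc a t ^ (k - 1) * b ≤ a t ^ (k - 1) * a t :=
            mul_le_mul_of_nonneg_left (hba t h) (pow_nonneg (ha t) _)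
        _ = a t ^ k := by rw [← pow_succ, Nat.sub_add_cancel hk]

theorem card_filter_not_le_sub {n l : ℕ} (hl : 1 ≤ l) (hln : l ≤ n) :
    (Finset.univ.filter fun t : Fin n => ¬(t.val + 1 ≤ n - l)).card = l := by
  have : (Finset.univ.filter fun t : Fin n => ¬(t.val + 1 ≤ n - l))
      = Finset.Ici ⟨n - l, by omega⟩ := by
    ext t; simp only [Finset.mem_filter, Finset.mem_univ, true_and, Finset.mem_Ici, Fin.le_def]
    omega
  rw [this, Fin.card_Ici]
  show n - (n - l) = l
  omega

theorem two_mul_pow_mul_pow_lt {n l : ℕ} (hn : 2 ≤ n) (hl : 1 ≤ l) :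
    2 * (2 * (n : ℚ) ^ (8 * n + 1)) ^ l * (n : ℚ) ^ l < (n : ℚ) ^ (8 * l * n) * (n : ℚ) ^ (8 * l) := by
  have hn' : (2 : ℚ) ≤ n := by exact_mod_cast hn
  calc 2 * (2 * (n : ℚ) ^ (8 * n + 1)) ^ l * (n : ℚ) ^ l
        = 2 ^ (l + 1) * (n : ℚ) ^ ((8 * n + 1) * l + l) := by ring
    _ ≤ (n : ℚ) ^ (l + 1) * (n : ℚ) ^ ((8 * n + 1) * l + l) := by gcongr
    _ = (n : ℚ) ^ (8 * l * n + (3 * l + 1)) := by ring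
    _ < (n : ℚ) ^ (8 * l * n + 8 * l) := pow_lt_pow_right₀ (by linarith) (by omega)
    _ = (n : ℚ) ^ (8 * l * n) * (n : ℚ) ^ (8 * l) := pow_add _ _ _

/-- **Inequality (5.24)**: the bound `|C_l| < n^{8ln}·(a_1⋯a_n)^n·(n²)!/(n!)^n` on the
dominant coefficient
`C_l = [ (n²)!/(l!((n−1)!)^l(n!)^{n−l}) + (S_{n,δ}/2 − 1)·(n²−1)!/((l−1)!((n−1)!)^l(n!)^{n−l}) ]
· (2|a|)^l · ∏_{t=1}^{n−l} a_t^n · ∏_{t=n−l+1}^{n} a_t^{n−1}`. -/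
theorem dominant_coefficient_bound (n : ℕ) (hn : 2 ≤ n) (l : ℕ) (hl1 : 1 ≤ l) (hln : l ≤ n) :
    |(((n ^ 2).factorial : ℚ)
          / ((l.factorial : ℚ) * ((n - 1).factorial : ℚ) ^ l * (n.factorial : ℚ) ^ (n - l))
        + (Snd n (δstd n) / 2 - 1) * ((n ^ 2 - 1).factorial : ℚ)
          / (((l - 1).factorial : ℚ) * ((n - 1).factorial : ℚ) ^ l
              * (n.factorial : ℚ) ^ (n - l)))
      * (2 * absA (astd n)) ^ l
      * ∏ t : Fin n, astd n t ^ (if t.val + 1 ≤ n - l then n else n - 1)|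
    < (n : ℚ) ^ (8 * l * n) * (∏ t : Fin n, astd n t) ^ n * ((n ^ 2).factorial : ℚ)
        / ((n.factorial : ℚ)) ^ n := by
  have hn1 : 1 ≤ n := by omega
  have hc : |Snd n (δstd n) / 2 - 1| ≤ ((n ^ 2 : ℕ) : ℚ) := by
    push_cast; exact abs_Snd_div_two_sub_one_le n (δstd_nonneg n) (add_two_mul_δstd_le hn1)
  have hbracket := abs_factorial_div_add_le (pow_pos (by omega : 0 < n) 2) l hc
    (by positivity : (0 : ℚ) < ((n - 1)! : ℚ) ^ l) (by positivity : (0 : ℚ) < (n ! : ℚ) ^ (n - l))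
  have habs : 0 ≤ 2 * absA (astd n) :=
    mul_nonneg zero_le_two (Finset.sum_nonneg fun t _ => (astd_pos t).le)
  have hweights : (2 * absA (astd n)) ^ l ≤ (2 * (n : ℚ) ^ (8 * n + 1)) ^ l :=
    pow_le_pow_left₀ habs (by linarith [absA_astd_le n]) l
  have hprod := prod_pow_ite_mul_pow_card_le (fun t : Fin n => t.val + 1 ≤ n - l) hn1
    (fun t => (astd_pos t).le) (by positivity) (fun t _ => pow_eight_le_astd t)
  have hZ : 0 ≤ ∏ t : Fin n, astd n t ^ (if t.val + 1 ≤ n - l then n else n - 1) :=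
    Finset.prod_nonneg fun t _ => pow_nonneg (astd_pos t).le _
  have hP : 0 < (∏ t, astd n t) ^ n := pow_pos (Finset.prod_pos fun t _ => astd_pos t) n
  rw [card_filter_not_le_sub hl1 hln, ← pow_mul,
    ← le_div_iff₀ (by positivity)] at hprod
  rw [factorial_pow_self_eq hn1 hln, abs_mul, abs_mul, abs_of_nonneg (pow_nonneg habs l),
    abs_of_nonneg hZ]
  set F : ℚ := ((n ^ 2)! : ℚ)
  set D : ℚ := ((n - 1)! : ℚ) ^ l * (n ! : ℚ) ^ (n - l)
  set W : ℚ := (2 * (n : ℚ) ^ (8 * n + 1)) ^ l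
  calc _ ≤ 2 * F / D * W * ((∏ t, astd n t) ^ n / n ^ (8 * l)) := by gcongr
    _ = (2 * W * n ^ l) * (F * (∏ t, astd n t) ^ n / (n ^ l * D * n ^ (8 * l))) := by
        field_simp
    _ < (n ^ (8 * l * n) * n ^ (8 * l)) * (F * (∏ t, astd n t) ^ n / (n ^ l * D * n ^ (8 * l))) :=
        mul_lt_mul_of_pos_right (two_mul_pow_mul_pow_lt hn hl1) (by positivity)
    _ = _ := by field_simp
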